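/- arXiv:1711.06961 — 4 statements merged into one kernel-verified Lean document; each statement's English description precedes it below -/
import Mathlib

section
/- There exists an atomic Puiseux monoid M that is a BF-monoid and has full system of sets of lengths: L(M) = { {0}, {1} } ∪ { S : S is a finite nonempty subset of Z_{\ge 2} }. -/
open scoped BigOperators

/-- A Puiseux monoid: an additive submonoid of ℚ consisting of nonnegative elements. -/
def IsPuiseux (M : AddSubmonoid ℚ) : Prop := ∀ x ∈ M, (0:ℚ) ≤ x

/-- `a` is an atom of the submonoid `S`. -/
def IsAtomOf {α : Type*} [AddCommMonoid α] (S : AddSubmonoid α) (a : α) : Prop :=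
  a ∈ S ∧ a ≠ 0 ∧ ∀ u v : α, u ∈ S → v ∈ S → a = u + v → u = 0 ∨ v = 0

/-- `x` has a factorization of length `n` into atoms of `S`. -/
def IsLengthOf {α : Type*} [AddCommMonoid α] (S : AddSubmonoid α) (x : α) (n : ℕ) : Prop :=
  ∃ f : Fin n → α, (∀ i, IsAtomOf S (f i)) ∧ x = ∑ i, f i

/-- The set of lengths of `x` in `S`. -/
def lengthsOf {α : Type*} [AddCommMonoid α] (S : AddSubmonoid α) (x : α) : Set ℕ :=
  {n | IsLengthOf S x n}

/-- `S` is atomic: every nonzero element is a finite sum of atoms. -/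
def AtomicM {α : Type*} [AddCommMonoid α] (S : AddSubmonoid α) : Prop :=
  ∀ x ∈ S, x ≠ 0 → ∃ n : ℕ, IsLengthOf S x n

/-- The system of sets of lengths of `M`. -/
def systemOfLengths (M : AddSubmonoid ℚ) : Set (Set ℕ) :=
  {S | ∃ x ∈ M, lengthsOf M x = S}

/-- The elementary Puiseux monoid ⟨1/p : p prime⟩. -/
def elemPM : AddSubmonoid ℚ :=
  AddSubmonoid.closure {q : ℚ | ∃ p : ℕ, p.Prime ∧ q = 1 / p}

open Finset in
section
namespace PZ

def Valid (S : Finset ℕ) : Prop := ∀ n ∈ S, 2 ≤ n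

def m (S : Finset ℕ) : ℕ := S.sup id
def Bb (S : Finset ℕ) : ℕ := 2 * m S
def R (S : Finset ℕ) : ℕ := m S * Bb S ^ m S + 1
def Cc (S : Finset ℕ) : ℕ := R S + Bb S ^ m S
def al (S : Finset ℕ) (n : ℕ) : ℕ := R S + Bb S ^ n
def Aa (S : Finset ℕ) (n : ℕ) : ℕ := 2 * al S n
def Nn (S : Finset ℕ) : ℕ := 4 * m S * Cc S + 1
def Bt (S : Finset ℕ) (n : ℕ) : ℕ := Nn S - (n - 1) * Aa S n

variable {S : Finset ℕ}

lemma le_m {n : ℕ} (hn : n ∈ S) : n ≤ m S := Finset.le_sup (f := id) hn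

lemma two_le_m (hS : Valid S) {n : ℕ} (hn : n ∈ S) : 2 ≤ m S :=
  le_trans (hS n hn) (le_m hn)

lemma R_pos : 0 < R S := Nat.succ_pos _

lemma mBm_lt_R : m S * Bb S ^ m S < R S := by unfold R; omega

lemma pow_le_pow_m (hS : Valid S) {n : ℕ} (hn : n ∈ S) : Bb S ^ n ≤ Bb S ^ m S :=
  Nat.pow_le_pow_right (by unfold Bb; have := two_le_m hS hn; omega) (le_m hn)

lemma al_le_C (hS : Valid S) {n : ℕ} (hn : n ∈ S) : al S n ≤ Cc S := by
  unfold al Cc; have := pow_le_pow_m hS hn; omega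

lemma R_le_al (n : ℕ) : R S ≤ al S n := Nat.le_add_right _ _

lemma al_pos (n : ℕ) : 0 < al S n := lt_of_lt_of_le R_pos (R_le_al n)

lemma al_lt_al (hS : Valid S) {n n' : ℕ} (hn : n ∈ S) (h : n < n') : al S n < al S n' := by
  unfold al
  have h2 : 2 ≤ Bb S := by unfold Bb; have := two_le_m hS hn; omega
  have := Nat.pow_lt_pow_right (by omega : 1 < Bb S) h
  omega

lemma lin_lb (d : ℕ → ℕ) : (∑ l ∈ S, d l) * R S ≤ ∑ l ∈ S, d l * al S l := by
  rw [Finset.sum_mul]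
  exact Finset.sum_le_sum fun l _ => Nat.mul_le_mul_left _ (R_le_al l)

lemma lin_ub (hS : Valid S) (d : ℕ → ℕ) :
    ∑ l ∈ S, d l * al S l ≤ (∑ l ∈ S, d l) * Cc S := by
  rw [Finset.sum_mul]
  exact Finset.sum_le_sum fun l hl => Nat.mul_le_mul_left _ (al_le_C hS hl)

/-- key size lemma: combination equal to `k * al n` has total weight `k` -/
lemma NL0 (hS : Valid S) {n k : ℕ} (hn : n ∈ S) (hk1 : 1 ≤ k) (hkm : k ≤ m S)
    (d : ℕ → ℕ) (h : ∑ l ∈ S, d l * al S l = k * al S n) : ∑ l ∈ S, d l = k := by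
  set t := ∑ l ∈ S, d l with ht
  have hkB : k * Bb S ^ m S < R S :=
    lt_of_le_of_lt (Nat.mul_le_mul_right _ hkm) mBm_lt_R
  have h1 : t ≤ k := by
    by_contra hc
    push_neg at hc
    have e1 : (k + 1) * R S ≤ k * R S + k * Bb S ^ m S := by
      calc (k + 1) * R S ≤ t * R S := Nat.mul_le_mul_right _ hc
      _ ≤ ∑ l ∈ S, d l * al S l := lin_lb d
      _ = k * al S n := h
      _ ≤ k * Cc S := Nat.mul_le_mul_left _ (al_le_C hS hn)
      _ = k * R S + k * Bb S ^ m S := by rw [Cc, Nat.mul_add]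
    have e2 : (k + 1) * R S = k * R S + R S := by rw [Nat.add_mul, one_mul]
    omega
  have h2 : k ≤ t := by
    by_contra hc
    push_neg at hc
    have htB : t * Bb S ^ m S < R S :=
      lt_of_le_of_lt (Nat.mul_le_mul_right _ (by omega : t ≤ m S)) mBm_lt_R
    have e1 : (t + 1) * R S ≤ t * R S + t * Bb S ^ m S := by
      calc (t + 1) * R S ≤ k * R S := Nat.mul_le_mul_right _ hc
      _ ≤ k * al S n := Nat.mul_le_mul_left _ (R_le_al n)
      _ = ∑ l ∈ S, d l * al S l := h.symm
      _ ≤ t * Cc S := lin_ub hS d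
      _ = t * R S + t * Bb S ^ m S := by rw [Cc, Nat.mul_add]
    have e2 : (t + 1) * R S = t * R S + R S := by rw [Nat.add_mul, one_mul]
    omega
  omega

/-- the incomparability lemma -/
lemma NL2 (hS : Valid S) {n n' : ℕ} (hn : n ∈ S) (hn' : n' ∈ S) (hne : n ≠ n')
    (d : ℕ → ℕ)
    (h : (n - 1) * al S n = (n' - 1) * al S n' + ∑ l ∈ S, d l * al S l) : False := by
  have h2n := hS n hn
  have h2n' := hS n' hn'
  have hnm := le_m hn
  have hn'm := le_m hn'
  have h2m : 2 ≤ m S := two_le_m hS hn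
  rcases lt_or_gt_of_ne hne with hlt | hgt
  · have hstrict : (n - 1) * al S n < (n' - 1) * al S n' := by
      have ha : al S n < al S n' := al_lt_al hS hn hlt
      calc (n - 1) * al S n ≤ (n' - 1) * al S n := Nat.mul_le_mul_right _ (by omega)
      _ < (n' - 1) * al S n' := mul_lt_mul_of_pos_left ha (by omega : 0 < n' - 1)
    omega
  · set t := ∑ l ∈ S, d l with ht
    have hnB : (n - 1) * Bb S ^ m S < R S :=
      lt_of_le_of_lt (Nat.mul_le_mul_right _ (by omega : n - 1 ≤ m S)) mBm_lt_R
    -- t = n - n'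
    have htub : t ≤ n - n' := by
      by_contra hc
      push_neg at hc
      have e1 : n * R S ≤ (n' - 1) * R S + t * R S := by
        rw [← Nat.add_mul]; exact Nat.mul_le_mul_right _ (by omega)
      have e2 : (n' - 1) * R S + t * R S ≤ (n - 1) * R S + (n - 1) * Bb S ^ m S := by
        calc (n' - 1) * R S + t * R S
            ≤ (n' - 1) * al S n' + ∑ l ∈ S, d l * al S l :=
              Nat.add_le_add (Nat.mul_le_mul_left _ (R_le_al n')) (lin_lb d)
        _ = (n - 1) * al S n := h.symm
        _ ≤ (n - 1) * Cc S := Nat.mul_le_mul_left _ (al_le_C hS hn)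
        _ = (n - 1) * R S + (n - 1) * Bb S ^ m S := by rw [Cc, Nat.mul_add]
      have e3 : n * R S = (n - 1) * R S + R S := by
        rw [← Nat.succ_pred_eq_of_pos (by omega : 0 < n), Nat.succ_mul]; simp
      omega
    have htlb : n - n' ≤ t := by
      by_contra hc
      push_neg at hc
      have e1 : (n - 1) * R S ≤ (n' - 1 + t) * Cc S := by
        calc (n - 1) * R S ≤ (n - 1) * al S n := Nat.mul_le_mul_left _ (R_le_al n)
        _ = (n' - 1) * al S n' + ∑ l ∈ S, d l * al S l := h
        _ ≤ (n' - 1) * Cc S + t * Cc S :=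
              Nat.add_le_add (Nat.mul_le_mul_left _ (al_le_C hS hn')) (lin_ub hS d)
        _ = (n' - 1 + t) * Cc S := (Nat.add_mul _ _ _).symm
      have e2 : (n' - 1 + t) * Cc S ≤ (n - 2) * R S + (n - 2) * Bb S ^ m S := by
        calc (n' - 1 + t) * Cc S ≤ (n - 2) * Cc S := Nat.mul_le_mul_right _ (by omega)
        _ = (n - 2) * R S + (n - 2) * Bb S ^ m S := by rw [Cc, Nat.mul_add]
      have e3 : (n - 1) * R S = (n - 2) * R S + R S := by
        rw [show n - 1 = (n-2) + 1 by omega, Nat.add_mul, one_mul]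
      have e4 : (n - 2) * Bb S ^ m S ≤ (n - 1) * Bb S ^ m S :=
        Nat.mul_le_mul_right _ (by omega)
      omega
    have htk : t = n - n' := by omega
    -- expand the equation
    have hsplit : ∑ l ∈ S, d l * al S l = t * R S + ∑ l ∈ S, d l * Bb S ^ l := by
      rw [ht, Finset.sum_mul, ← Finset.sum_add_distrib]
      exact Finset.sum_congr rfl fun l _ => by rw [al, Nat.mul_add]
    set κ := ∑ l ∈ S, d l * Bb S ^ l with hκ
    have hR1 : (n - 1) * R S = (n' - 1) * R S + t * R S := by
      rw [← Nat.add_mul]; congr 1; omega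
    have hkey : (n - 1) * Bb S ^ n = (n' - 1) * Bb S ^ n' + κ := by
      have e5 : (n - 1) * al S n = (n - 1) * R S + (n - 1) * Bb S ^ n := by
        rw [al, Nat.mul_add]
      have e6 : (n' - 1) * al S n' = (n' - 1) * R S + (n' - 1) * Bb S ^ n' := by
        rw [al, Nat.mul_add]
      omega
    -- divisibility contradiction mod Bb^(n'+1)
    set S1 := S.filter (fun l => l ≤ n') with hS1
    set S2 := S.filter (fun l => ¬ l ≤ n') with hS2
    have hκsplit : κ = (∑ l ∈ S1, d l * Bb S ^ l) + ∑ l ∈ S2, d l * Bb S ^ l := by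
      rw [hκ, hS1, hS2, Finset.sum_filter_add_sum_filter_not]
    set κ1 := ∑ l ∈ S1, d l * Bb S ^ l with hκ1
    set κ2 := ∑ l ∈ S2, d l * Bb S ^ l with hκ2
    have hdvd2 : Bb S ^ (n' + 1) ∣ κ2 := by
      apply Finset.dvd_sum
      intro l hl
      have : n' + 1 ≤ l := by
        simp only [hS2, Finset.mem_filter] at hl; omega
      exact Dvd.dvd.mul_left (pow_dvd_pow _ this) _
    have hdvdn : Bb S ^ (n' + 1) ∣ (n - 1) * Bb S ^ n :=
      Dvd.dvd.mul_left (pow_dvd_pow _ (by omega : n' + 1 ≤ n)) _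
    set X := (n' - 1) * Bb S ^ n' + κ1 with hX
    have hXeq : X = (n - 1) * Bb S ^ n - κ2 := by omega
    have hdvdX : Bb S ^ (n' + 1) ∣ X := hXeq ▸ Nat.dvd_sub hdvdn hdvd2
    have hBpos : 0 < Bb S := by rw [Bb]; omega
    have hXpos : 0 < X := by
      have : 0 < Bb S ^ n' := Nat.pow_pos hBpos
      have : 1 * 1 ≤ (n' - 1) * Bb S ^ n' := Nat.mul_le_mul (by omega) this
      omega
    have hXlt : X < Bb S ^ (n' + 1) := by
      have hk1b : κ1 ≤ t * Bb S ^ n' := by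
        calc κ1 ≤ ∑ l ∈ S1, d l * Bb S ^ n' := by
              apply Finset.sum_le_sum
              intro l hl
              have hl' : l ≤ n' := by simp only [hS1, Finset.mem_filter] at hl; omega
              exact Nat.mul_le_mul_left _ (Nat.pow_le_pow_right hBpos hl')
        _ = (∑ l ∈ S1, d l) * Bb S ^ n' := (Finset.sum_mul _ _ _).symm
        _ ≤ t * Bb S ^ n' := by
              apply Nat.mul_le_mul_right
              exact Finset.sum_le_sum_of_subset (Finset.filter_subset _ _)
      have e1 : X ≤ (n' - 1 + t) * Bb S ^ n' := by
        rw [Nat.add_mul]; omega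
      have e2 : (n' - 1 + t) * Bb S ^ n' < Bb S * Bb S ^ n' := by
        apply mul_lt_mul_of_pos_right _ (Nat.pow_pos hBpos)
        rw [Bb]; omega
      have e3 : Bb S ^ (n' + 1) = Bb S * Bb S ^ n' := by rw [pow_succ, mul_comm]
      omega
    have := Nat.le_of_dvd hXpos hdvdX
    omega

end PZ

namespace PZ2
open PZ

variable {S : Finset ℕ}

lemma AaC (hS : Valid S) {n : ℕ} (hn : n ∈ S) : Aa S n ≤ 2 * Cc S :=
  Nat.mul_le_mul_left _ (al_le_C hS hn)

lemma Bt_add (hS : Valid S) {n : ℕ} (hn : n ∈ S) :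
    Bt S n + (n - 1) * Aa S n = Nn S := by
  have h1 : (n - 1) * Aa S n ≤ (m S - 1) * (2 * Cc S) :=
    Nat.mul_le_mul (by have := le_m hn; omega) (AaC hS hn)
  have h2 : (m S - 1) * (2 * Cc S) ≤ Nn S := by
    have h3 : (m S - 1) * (2 * Cc S) ≤ m S * (2 * Cc S) :=
      Nat.mul_le_mul_right _ (by omega)
    have h4 : Nn S = 4 * m S * Cc S + 1 := rfl
    have h5 : m S * (2 * Cc S) * 2 = 4 * m S * Cc S := by ring
    omega
  rw [Bt]
  omega

lemma Bt_lb (hS : Valid S) {n : ℕ} (hn : n ∈ S) :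
    (2 * m S + 2) * Cc S + 1 ≤ Bt S n := by
  have h1 := Bt_add hS hn
  have h2 : (n - 1) * Aa S n ≤ (m S - 1) * (2 * Cc S) :=
    Nat.mul_le_mul (by have := le_m hn; omega) (AaC hS hn)
  have e1 : Nn S = 4 * (m S * Cc S) + 1 := by rw [Nn]; ring
  have e2 : (2 * m S + 2) * Cc S = 2 * (m S * Cc S) + 2 * Cc S := by ring
  have e3 : (m S - 1) * (2 * Cc S) + 2 * Cc S = 2 * (m S * Cc S) := by
    obtain ⟨k, hk⟩ := Nat.exists_eq_add_of_le (by have := two_le_m hS hn; omega : 1 ≤ m S)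
    rw [hk, Nat.add_sub_cancel_left]; ring
  omega

lemma Bt_pos (hS : Valid S) {n : ℕ} (hn : n ∈ S) : 0 < Bt S n := by
  have := Bt_lb hS hn; omega

lemma Nn_odd : Nn S % 2 = 1 := by
  have : Nn S = 2 * (2 * m S * Cc S) + 1 := by rw [Nn]; ring
  omega

lemma Bt_odd (hS : Valid S) {n : ℕ} (hn : n ∈ S) : Bt S n % 2 = 1 := by
  have h1 := Bt_add hS hn
  have h2 : (n - 1) * Aa S n = 2 * ((n-1) * al S n) := by rw [Aa]; ring
  have h3 := @Nn_odd S
  omega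

lemma Aa_le_Nn (hS : Valid S) {n : ℕ} (hn : n ∈ S) : Aa S n ≤ Nn S := by
  have h1 := AaC hS hn
  have h2 : 2 * Cc S ≤ 4 * m S * Cc S := by
    have := Nat.mul_le_mul_right (Cc S) (by have := two_le_m hS hn; omega : 2 ≤ 4 * m S)
    linarith
  have h3 : Nn S = 4 * m S * Cc S + 1 := rfl
  omega

lemma Bt_le_Nn (hS : Valid S) {n : ℕ} (hn : n ∈ S) : Bt S n ≤ Nn S := by
  have := Bt_add hS hn; omega

lemma Nn_pos : 0 < Nn S := Nat.succ_pos _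

lemma Aa_pos (n : ℕ) : 0 < Aa S n := by
  have := @al_pos S n; rw [Aa]; omega

/-- parity of combinations of odd numbers -/
lemma parity_sum (s : Finset ℕ) (c g : ℕ → ℕ) (hg : ∀ l ∈ s, g l % 2 = 1) :
    (∑ l ∈ s, c l * g l) % 2 = (∑ l ∈ s, c l) % 2 := by
  induction s using Finset.induction_on with
  | empty => rfl
  | @insert a s ha ih =>
    rw [Finset.sum_insert ha, Finset.sum_insert ha]
    have h1 := ih (fun l hl => hg l (Finset.mem_insert_of_mem hl))
    have h2 : (c a * g a) % 2 = c a % 2 := by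
      rw [Nat.mul_mod, hg a (Finset.mem_insert_self a s)]
      omega
    omega

lemma exists_eq_single (s : Finset ℕ) (c : ℕ → ℕ) (h : ∑ l ∈ s, c l = 1) :
    ∃ l0 ∈ s, c l0 = 1 ∧ ∀ l ∈ s, l ≠ l0 → c l = 0 := by
  induction s using Finset.induction_on with
  | empty => simp at h
  | @insert a s ha ih =>
    rw [Finset.sum_insert ha] at h
    rcases Nat.eq_zero_or_pos (c a) with h0 | h0
    · have h1 : ∑ l ∈ s, c l = 1 := by omega
      obtain ⟨l0, hl0, hc1, hrest⟩ := ih h1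
      exact ⟨l0, Finset.mem_insert_of_mem hl0, hc1, fun l hl hne => by
        rcases Finset.mem_insert.mp hl with rfl | hl'
        · exact h0
        · exact hrest l hl' hne⟩
    · have hca : c a = 1 := by omega
      have hsum0 : ∑ l ∈ s, c l = 0 := by omega
      refine ⟨a, Finset.mem_insert_self a s, hca, fun l hl hne => ?_⟩
      rcases Finset.mem_insert.mp hl with rfl | hl'
      · exact absurd rfl hne
      · exact (Finset.sum_eq_zero_iff.mp hsum0) l hl'

end PZ2

namespace PZ3
open PZ PZ2

variable {S : Finset ℕ}

lemma sumAa (d : ℕ → ℕ) : ∑ l ∈ S, d l * Aa S l = 2 * ∑ l ∈ S, d l * al S l := by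
  rw [Finset.mul_sum]
  exact Finset.sum_congr rfl fun l _ => by rw [Aa]; ring

lemma sum_c_odd (hS : Valid S) (c : ℕ → ℕ) {v : ℕ} (hv : v % 2 = 1)
    (dsum : ℕ) (h : ∑ l ∈ S, c l * Bt S l + 2 * dsum = v) :
    (∑ l ∈ S, c l) % 2 = 1 := by
  have hp := parity_sum S c (Bt S) (fun l hl => Bt_odd hS hl)
  omega

lemma sum_c_lb (c : ℕ → ℕ) (Q : ℕ) (hQ : ∀ l ∈ S, Q ≤ Bt S l) :
    (∑ l ∈ S, c l) * Q ≤ ∑ l ∈ S, c l * Bt S l := by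
  rw [Finset.sum_mul]
  exact Finset.sum_le_sum fun l hl => Nat.mul_le_mul_left _ (hQ l hl)

lemma NL3 (hS : Valid S) (c d : ℕ → ℕ)
    (h : ∑ l ∈ S, c l * Bt S l + ∑ l ∈ S, d l * Aa S l = Nn S) :
    (∑ l ∈ S, c l + ∑ l ∈ S, d l) ∈ S := by
  have hAa := sumAa (S := S) d
  have hco : (∑ l ∈ S, c l) % 2 = 1 :=
    sum_c_odd hS c Nn_odd _ (by rw [← hAa]; exact h)
  have hcle : ∑ l ∈ S, c l ≤ 1 := by
    by_contra hc
    push_neg at hc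
    have h1 := sum_c_lb (S := S) c _ (fun l hl => Bt_lb hS hl)
    have h2 : 2 * ((2 * m S + 2) * Cc S + 1) ≤ (∑ l ∈ S, c l) * ((2 * m S + 2) * Cc S + 1) :=
      Nat.mul_le_mul_right _ hc
    have E1 : 2 * ((2 * m S + 2) * Cc S + 1) = 4 * (m S * Cc S) + 4 * Cc S + 2 := by ring
    have E2 : Nn S = 4 * (m S * Cc S) + 1 := by rw [Nn]; ring
    omega
  have hc1 : ∑ l ∈ S, c l = 1 := by omega
  obtain ⟨l0, hl0, hcl0, hrest⟩ := exists_eq_single S c hc1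
  have hcBt : ∑ l ∈ S, c l * Bt S l = Bt S l0 := by
    rw [Finset.sum_eq_single_of_mem l0 hl0 (fun b hb hbne => by rw [hrest b hb hbne, zero_mul]),
      hcl0, one_mul]
  have hba := Bt_add hS hl0
  have hd : ∑ l ∈ S, d l * al S l = (l0 - 1) * al S l0 := by
    have E : (l0 - 1) * Aa S l0 = 2 * ((l0 - 1) * al S l0) := by rw [Aa]; ring
    omega
  have hdsum : ∑ l ∈ S, d l = l0 - 1 :=
    NL0 hS hl0 (by have := hS l0 hl0; omega) (by have := le_m hl0; omega) d hd
  have : ∑ l ∈ S, c l + ∑ l ∈ S, d l = l0 := by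
    have := hS l0 hl0; omega
  rwa [this]

lemma NL4 (hS : Valid S) {n : ℕ} (hn : n ∈ S) (c d : ℕ → ℕ)
    (h : ∑ l ∈ S, c l * Bt S l + ∑ l ∈ S, d l * Aa S l = Aa S n) :
    ∑ l ∈ S, c l + ∑ l ∈ S, d l = 1 := by
  have hc0 : ∑ l ∈ S, c l = 0 := by
    by_contra hc
    have hc' : 1 ≤ ∑ l ∈ S, c l := Nat.pos_of_ne_zero hc
    have h1 := sum_c_lb (S := S) c _ (fun l hl => Bt_lb hS hl)
    have h2 : 1 * ((2 * m S + 2) * Cc S + 1) ≤ (∑ l ∈ S, c l) * ((2 * m S + 2) * Cc S + 1) :=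
      Nat.mul_le_mul_right _ hc'
    have h3 := AaC hS hn
    have E1 : 1 * ((2 * m S + 2) * Cc S + 1) = 2 * (m S * Cc S) + 2 * Cc S + 1 := by ring
    omega
  have hcBt : ∑ l ∈ S, c l * Bt S l = 0 := by
    apply Finset.sum_eq_zero
    intro l hl
    rw [Finset.sum_eq_zero_iff.mp hc0 l hl, zero_mul]
  have hAa := sumAa (S := S) d
  have hd : ∑ l ∈ S, d l * al S l = 1 * al S n := by
    have E : Aa S n = 2 * al S n := rfl
    rw [one_mul]; omega
  have := NL0 hS hn (le_refl 1) (by have := two_le_m hS hn; omega) d hd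
  omega

lemma NL5 (hS : Valid S) {n : ℕ} (hn : n ∈ S) (c d : ℕ → ℕ)
    (h : ∑ l ∈ S, c l * Bt S l + ∑ l ∈ S, d l * Aa S l = Bt S n) :
    ∑ l ∈ S, c l + ∑ l ∈ S, d l = 1 := by
  have hAa := sumAa (S := S) d
  have hco : (∑ l ∈ S, c l) % 2 = 1 :=
    sum_c_odd hS c (Bt_odd hS hn) _ (by rw [← hAa]; exact h)
  have hcle : ∑ l ∈ S, c l ≤ 1 := by
    by_contra hc
    push_neg at hc
    have h1 := sum_c_lb (S := S) c _ (fun l hl => Bt_lb hS hl)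
    have h2 : 2 * ((2 * m S + 2) * Cc S + 1) ≤ (∑ l ∈ S, c l) * ((2 * m S + 2) * Cc S + 1) :=
      Nat.mul_le_mul_right _ hc
    have h3 := Bt_le_Nn hS hn
    have E1 : 2 * ((2 * m S + 2) * Cc S + 1) = 4 * (m S * Cc S) + 4 * Cc S + 2 := by ring
    have E2 : Nn S = 4 * (m S * Cc S) + 1 := by rw [Nn]; ring
    omega
  have hc1 : ∑ l ∈ S, c l = 1 := by omega
  obtain ⟨l0, hl0, hcl0, hrest⟩ := exists_eq_single S c hc1
  have hcBt : ∑ l ∈ S, c l * Bt S l = Bt S l0 := by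
    rw [Finset.sum_eq_single_of_mem l0 hl0 (fun b hb hbne => by rw [hrest b hb hbne, zero_mul]),
      hcl0, one_mul]
  have hba := Bt_add hS hl0
  have hbn := Bt_add hS hn
  -- ∑ d Aa + (n-1) Aa n = (l0-1) Aa l0
  have hkey : ∑ l ∈ S, d l * Aa S l + (n - 1) * Aa S n = (l0 - 1) * Aa S l0 := by omega
  rcases eq_or_ne l0 n with rfl | hne
  · have hz : ∑ l ∈ S, d l * Aa S l = 0 := by omega
    have hdl : ∀ l ∈ S, d l = 0 := by
      intro l hl
      have h1 := Finset.sum_eq_zero_iff.mp hz l hl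
      rcases Nat.mul_eq_zero.mp h1 with h' | h'
      · exact h'
      · exact absurd h' (by have := Aa_pos (S := S) l; omega)
    have : ∑ l ∈ S, d l = 0 := Finset.sum_eq_zero hdl
    omega
  · exfalso
    have hkey2 : (l0 - 1) * al S l0 = (n - 1) * al S n + ∑ l ∈ S, d l * al S l := by
      have E1 : (l0 - 1) * Aa S l0 = 2 * ((l0 - 1) * al S l0) := by rw [Aa]; ring
      have E2 : (n - 1) * Aa S n = 2 * ((n - 1) * al S n) := by rw [Aa]; ring
      omega
    exact NL2 hS hl0 hn hne d hkey2

end PZ3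

namespace PZ4
open PZ PZ2 PZ3

lemma pow2_odd_inj : ∀ a c b d : ℕ, 2^a*(2*b+1) = 2^c*(2*d+1) → a = c ∧ b = d := by
  intro a
  induction a with
  | zero =>
    intro c b d h
    cases c with
    | zero => simp at h; omega
    | succ c =>
      exfalso
      have e : 2^(c+1)*(2*d+1) = 2*(2^c*(2*d+1)) := by ring
      simp only [pow_zero, one_mul] at h
      omega
  | succ a ih =>
    intro c b d h
    cases c with
    | zero =>
      exfalso
      have e : 2^(a+1)*(2*b+1) = 2*(2^a*(2*b+1)) := by ring
      simp only [pow_zero, one_mul] at h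
      omega
    | succ c =>
      have e1 : 2^(a+1)*(2*b+1) = 2*(2^a*(2*b+1)) := by ring
      have e2 : 2^(c+1)*(2*d+1) = 2*(2^c*(2*d+1)) := by ring
      have h' : 2^a*(2*b+1) = 2^c*(2*d+1) := by omega
      have := ih c b d h'
      omega

noncomputable def E (S : Finset ℕ) : ℕ := Encodable.encode S
noncomputable def cix (S : Finset ℕ) : ℕ := 2 ^ E S * (2 * Nn S + 1)
noncomputable def q (S : Finset ℕ) : ℕ := Nat.nth Nat.Prime (cix S)
noncomputable def r (S : Finset ℕ) : ℕ := 2 ^ E S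

lemma E_inj : Function.Injective E := Encodable.encode_injective

lemma cix_inj : Function.Injective cix := by
  intro S1 S2 h
  have := pow2_odd_inj (E S1) (E S2) (Nn S1) (Nn S2) h
  exact E_inj this.1

lemma q_prime (S : Finset ℕ) : (q S).Prime :=
  Nat.nth_mem_of_infinite Nat.infinite_setOf_prime _

lemma q_inj : Function.Injective q := fun S1 S2 h =>
  cix_inj ((Nat.nth_strictMono Nat.infinite_setOf_prime).injective h)

lemma cix_le_q (S : Finset ℕ) : cix S ≤ q S :=
  (Nat.nth_strictMono Nat.infinite_setOf_prime).le_apply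

lemma r_pos (S : Finset ℕ) : 0 < r S := Nat.pow_pos (by omega)

lemma r_le_cix (S : Finset ℕ) : r S ≤ cix S :=
  Nat.le_mul_of_pos_right _ (by omega)

lemma rNn_lt_q (S : Finset ℕ) : r S * Nn S < q S := by
  have h1 : r S * Nn S < cix S := by
    rw [cix, r]
    have : 0 < 2 ^ E S := Nat.pow_pos (by omega)
    nlinarith [Nn_pos (S := S)]
  exact lt_of_lt_of_le h1 (cix_le_q S)

lemma two_lt_q (S : Finset ℕ) : 2 < q S := by
  have h1 := cix_le_q S
  have h2 : 2 * Nn S + 1 ≤ cix S := by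
    rw [cix]
    have : 1 ≤ 2 ^ E S := Nat.one_le_two_pow
    nlinarith
  have := Nn_pos (S := S)
  omega

lemma q_pos (S : Finset ℕ) : 0 < q S := by have := two_lt_q S; omega

lemma q_not_dvd_r (S S' : Finset ℕ) : ¬ q S ∣ r S' := by
  intro h
  have h2 := (Nat.Prime.dvd_of_dvd_pow (q_prime S)) h
  have := Nat.le_of_dvd (by omega) h2
  have := two_lt_q S
  omega

lemma q_not_dvd_q {S S' : Finset ℕ} (h : S ≠ S') : ¬ q S ∣ q S' := by
  intro hd
  have := (Nat.prime_dvd_prime_iff_eq (q_prime S) (q_prime S')).mp hd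
  exact h (q_inj this)

/-- value of an atom -/
noncomputable def av (S : Finset ℕ) (w : ℕ) : ℚ := (r S : ℚ) * (w : ℚ) / (q S : ℚ)

lemma av_pos (S : Finset ℕ) {w : ℕ} (hw : 0 < w) : 0 < av S w := by
  rw [av]
  have h1 : (0:ℚ) < r S := by exact_mod_cast r_pos S
  have h2 : (0:ℚ) < q S := by exact_mod_cast q_pos S
  have h3 : (0:ℚ) < w := by exact_mod_cast hw
  positivity

lemma av_nonneg (S : Finset ℕ) (w : ℕ) : 0 ≤ av S w := by
  rw [av]
  have h2 : (0:ℚ) < q S := by exact_mod_cast q_pos S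
  positivity

/-- The set of generating atoms -/
def Atoms : Set ℚ :=
  {x | ∃ S : Finset ℕ, Valid S ∧ ∃ n ∈ S, x = av S (Aa S n) ∨ x = av S (Bt S n)}

lemma Atoms_pos {x : ℚ} (hx : x ∈ Atoms) : 0 < x := by
  obtain ⟨S, hS, n, hn, h | h⟩ := hx
  · rw [h]; exact av_pos S (Aa_pos n)
  · rw [h]; exact av_pos S (Bt_pos hS hn)

/-- The monoid -/
noncomputable def MM : AddSubmonoid ℚ := AddSubmonoid.closure Atoms

end PZ4

namespace PZ5
open PZ PZ2 PZ3 PZ4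

lemma grouping {n : ℕ} (f : Fin n → ℚ) (hf : ∀ i, f i ∈ Atoms) :
    ∃ (T : Finset (Finset ℕ)) (W cnt : Finset ℕ → ℕ),
      (∀ U ∈ T, Valid U) ∧ (∀ U ∈ T, 0 < W U) ∧
      (n = ∑ U ∈ T, cnt U) ∧
      ((∑ i, f i) = ∑ U ∈ T, (r U : ℚ) * (W U : ℚ) / (q U : ℚ)) ∧
      (∀ U ∈ T, ∃ c d : ℕ → ℕ,
        W U = ∑ l ∈ U, c l * Bt U l + ∑ l ∈ U, d l * Aa U l ∧
        cnt U = ∑ l ∈ U, (c l + d l)) := by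
  classical
  choose blk hval tag htag hform using hf
  set w : Fin n → ℕ := fun i =>
    if f i = av (blk i) (Aa (blk i) (tag i)) then Aa (blk i) (tag i) else Bt (blk i) (tag i)
    with hwdef
  have hw : ∀ i, f i = av (blk i) (w i) := by
    intro i
    by_cases h : f i = av (blk i) (Aa (blk i) (tag i))
    · rw [hwdef]; simp only [if_pos h]; exact h
    · rw [hwdef]; simp only [if_neg h]; exact (hform i).resolve_left h
  have hwpos : ∀ i, 0 < w i := by
    intro i
    rw [hwdef]
    by_cases h : f i = av (blk i) (Aa (blk i) (tag i))
    · simp only [if_pos h]; exact Aa_pos _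
    · simp only [if_neg h]; exact Bt_pos (hval i) (htag i)
  refine ⟨Finset.univ.image blk,
    fun U => ∑ i ∈ Finset.univ.filter (fun i => blk i = U), w i,
    fun U => (Finset.univ.filter (fun i => blk i = U)).card, ?_, ?_, ?_, ?_, ?_⟩
  · rintro U hU; obtain ⟨i, _, rfl⟩ := Finset.mem_image.mp hU; exact hval i
  · rintro U hU
    obtain ⟨i, _, rfl⟩ := Finset.mem_image.mp hU
    have hi : i ∈ Finset.univ.filter (fun j => blk j = blk i) := by simp
    calc 0 < w i := hwpos i
    _ ≤ _ := Finset.single_le_sum (fun j _ => Nat.zero_le _) hi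
  · have := Finset.card_eq_sum_card_fiberwise
      (fun (x : Fin n) (_ : x ∈ Finset.univ) => Finset.mem_image_of_mem blk (Finset.mem_univ x))
    simpa using this
  · rw [← Finset.sum_fiberwise_of_maps_to
      (fun (x : Fin n) (_ : x ∈ Finset.univ) => Finset.mem_image_of_mem blk (Finset.mem_univ x)) f]
    apply Finset.sum_congr rfl
    intro U hU
    have h1 : ∀ i ∈ Finset.univ.filter (fun i => blk i = U),
        f i = (r U : ℚ) * (w i : ℚ) / (q U : ℚ) := by
      intro i hi
      have hb : blk i = U := (Finset.mem_filter.mp hi).2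
      rw [hw i, av, hb]
    rw [Finset.sum_congr rfl h1, ← Finset.sum_div, ← Finset.mul_sum]
    congr 2
    push_cast
    rfl
  · intro U hU
    dsimp only
    set PA : Fin n → Prop := fun i => f i = av (blk i) (Aa (blk i) (tag i)) with hPA
    set cB : ℕ → ℕ := fun l =>
      (Finset.univ.filter (fun i => (blk i = U ∧ tag i = l) ∧ ¬ PA i)).card with hcB
    set cA : ℕ → ℕ := fun l =>
      (Finset.univ.filter (fun i => (blk i = U ∧ tag i = l) ∧ PA i)).card with hcA
    have hmap : ∀ i ∈ Finset.univ.filter (fun i => blk i = U), tag i ∈ U := by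
      intro i hi
      have hb : blk i = U := (Finset.mem_filter.mp hi).2
      rw [← hb]; exact htag i
    refine ⟨cB, cA, ?_, ?_⟩
    · rw [← Finset.sum_fiberwise_of_maps_to hmap w]
      have per_l : ∀ l ∈ U,
          ∑ i ∈ (Finset.univ.filter (fun i => blk i = U)).filter (fun i => tag i = l), w i
            = cB l * Bt U l + cA l * Aa U l := by
        intro l hl
        rw [Finset.filter_filter]
        rw [← Finset.sum_filter_add_sum_filter_not
          (Finset.univ.filter (fun i => blk i = U ∧ tag i = l)) PA w]
        rw [Finset.filter_filter, Finset.filter_filter]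
        have hconstA : ∀ i ∈ Finset.univ.filter (fun i => (blk i = U ∧ tag i = l) ∧ PA i),
            w i = Aa U l := by
          intro i hi
          obtain ⟨-, ⟨hb, ht⟩, hA⟩ := Finset.mem_filter.mp hi
          have : w i = Aa (blk i) (tag i) := by
            rw [hwdef]; simp only [if_pos (show f i = _ from hA)]
          rw [this, hb, ht]
        have hconstB : ∀ i ∈ Finset.univ.filter (fun i => (blk i = U ∧ tag i = l) ∧ ¬ PA i),
            w i = Bt U l := by
          intro i hi
          obtain ⟨-, ⟨hb, ht⟩, hA⟩ := Finset.mem_filter.mp hi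
          have : w i = Bt (blk i) (tag i) := by
            rw [hwdef]; simp only [if_neg (show ¬ f i = _ from hA)]
          rw [this, hb, ht]
        rw [Finset.sum_congr rfl hconstA, Finset.sum_congr rfl hconstB,
          Finset.sum_const, Finset.sum_const, smul_eq_mul, smul_eq_mul]
        simp only [hcA, hcB]
        ring
      rw [Finset.sum_congr rfl per_l, Finset.sum_add_distrib]
    · have h0 := Finset.card_eq_sum_card_fiberwise hmap
      rw [h0]
      apply Finset.sum_congr rfl
      intro l hl
      rw [Finset.filter_filter]
      have := Finset.card_filter_add_card_filter_not
        (s := Finset.univ.filter (fun i => blk i = U ∧ tag i = l)) (p := PA)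
      rw [Finset.filter_filter, Finset.filter_filter] at this
      simp only [hcA, hcB]
      omega

end PZ5

namespace PZ6
open PZ PZ2 PZ3 PZ4 PZ5

/-- clearing denominators: divisibility of block weights -/
lemma block_dvd (T : Finset (Finset ℕ)) (W : Finset ℕ → ℕ) (a b : ℕ) (hb : 0 < b)
    (heq : ∑ U ∈ T, (r U : ℚ) * (W U : ℚ) / (q U : ℚ) = (a : ℚ) / (b : ℚ)) :
    ∀ U0 ∈ T, q U0 ∣ W U0 * b := by
  intro U0 hU0
  classical
  set P : ℕ := ∏ U ∈ T, q U with hP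
  set PU : Finset ℕ → ℕ := fun U => ∏ V ∈ T.erase U, q V with hPU
  have hqP : ∀ U ∈ T, q U * PU U = P := fun U hU => Finset.mul_prod_erase T q hU
  -- natural number identity
  have hN : ∑ U ∈ T, r U * W U * PU U * b = a * P := by
    have hcast : ((∑ U ∈ T, r U * W U * PU U * b : ℕ) : ℚ)
        = ((a * P : ℕ) : ℚ) := by
      push_cast
      have hb' : (b : ℚ) ≠ 0 := by positivity
      calc ∑ U ∈ T, (r U : ℚ) * (W U) * (PU U) * b
          = ∑ U ∈ T, ((r U : ℚ) * (W U) / (q U)) * ((P : ℚ) * b) := by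
            apply Finset.sum_congr rfl
            intro U hU
            have hq' : (q U : ℚ) ≠ 0 := by
              have := q_pos U; positivity
            have : (P : ℚ) = (q U : ℚ) * (PU U : ℚ) := by
              exact_mod_cast congrArg (Nat.cast : ℕ → ℚ) (hqP U hU).symm
            rw [this]
            field_simp
      _ = (∑ U ∈ T, (r U : ℚ) * (W U) / (q U)) * ((P : ℚ) * b) := by
            rw [Finset.sum_mul]
      _ = ((a : ℚ) / b) * ((P : ℚ) * b) := by rw [heq]
      _ = (a : ℚ) * P := by field_simp
    exact_mod_cast hcast
  -- now work mod q U0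
  have hdvd_others : q U0 ∣ ∑ U ∈ T.erase U0, r U * W U * PU U * b := by
    apply Finset.dvd_sum
    intro U hU
    have hU0mem : U0 ∈ T.erase U := by
      rw [Finset.mem_erase] at hU ⊢
      exact ⟨fun h => hU.1 h.symm, hU0⟩
    have : q U0 ∣ PU U := Finset.dvd_prod_of_mem q hU0mem
    exact Dvd.dvd.mul_right (Dvd.dvd.mul_left this _) _
  have hdvd_rhs : q U0 ∣ a * P := Dvd.dvd.mul_left (Finset.dvd_prod_of_mem q hU0) _
  have hsum_split : r U0 * W U0 * PU U0 * b + ∑ U ∈ T.erase U0, r U * W U * PU U * b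
      = a * P := by
    exact (Finset.add_sum_erase T _ hU0).trans hN
  have hdvd_term : q U0 ∣ r U0 * W U0 * PU U0 * b := by
    have e : r U0 * W U0 * PU U0 * b
        = a * P - ∑ U ∈ T.erase U0, r U * W U * PU U * b := by omega
    rw [e]
    exact Nat.dvd_sub hdvd_rhs hdvd_others
  -- strip the coprime factors
  have hq := q_prime U0
  rcases (Nat.Prime.dvd_mul hq).mp hdvd_term with h1 | h1
  · rcases (Nat.Prime.dvd_mul hq).mp h1 with h2 | h2
    · rcases (Nat.Prime.dvd_mul hq).mp h2 with h3 | h3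
      · exact absurd h3 (q_not_dvd_r U0 U0)
      · exact Dvd.dvd.mul_right h3 b
    · exfalso
      have := (Prime.dvd_finset_prod_iff (Nat.Prime.prime hq) q).mp h2
      obtain ⟨V, hV, hdvdV⟩ := this
      have : U0 = V := q_inj ((Nat.prime_dvd_prime_iff_eq hq (q_prime V)).mp hdvdV)
      rw [Finset.mem_erase] at hV
      exact hV.1 this.symm
  · exact Dvd.dvd.mul_left h1 _

/-- a block sum is at most the total -/
lemma block_le_total (T : Finset (Finset ℕ)) (W : Finset ℕ → ℕ) {U0 : Finset ℕ} (hU0 : U0 ∈ T)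
    (y : ℚ) (heq : ∑ U ∈ T, (r U : ℚ) * (W U : ℚ) / (q U : ℚ) = y) :
    (r U0 : ℚ) * (W U0 : ℚ) / (q U0 : ℚ) ≤ y := by
  rw [← heq]
  apply Finset.single_le_sum _ hU0
  intro U _
  have h1 : (0:ℚ) ≤ (r U : ℚ) := by positivity
  have h2 : (0:ℚ) < (q U : ℚ) := by exact_mod_cast q_pos U
  positivity

/-- single-block isolation -/
lemma single_block (T : Finset (Finset ℕ)) (W : Finset ℕ → ℕ)
    (hpos : ∀ U ∈ T, 0 < W U)
    {S0 : Finset ℕ} {v : ℕ} (hv : 0 < v) (hvN : v ≤ Nn S0)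
    (heq : ∑ U ∈ T, (r U : ℚ) * (W U : ℚ) / (q U : ℚ) = (r S0 : ℚ) * (v : ℚ) / (q S0 : ℚ)) :
    T = {S0} ∧ W S0 = v := by
  have hlt1 : (r S0 : ℚ) * (v : ℚ) / (q S0 : ℚ) < 1 := by
    have h1 : r S0 * v < q S0 :=
      lt_of_le_of_lt (Nat.mul_le_mul_left _ hvN) (rNn_lt_q S0)
    rw [div_lt_one (by exact_mod_cast q_pos S0)]
    exact_mod_cast h1
  have hsub : ∀ U ∈ T, U = S0 := by
    intro U0 hU0
    by_contra hne
    have hdvd := block_dvd T W (r S0 * v) (q S0) (q_pos S0)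
      (by rw [heq]; push_cast; ring_nf) U0 hU0
    have hqq : ¬ q U0 ∣ q S0 := q_not_dvd_q hne
    have hWdvd : q U0 ∣ W U0 :=
      ((Nat.Prime.dvd_mul (q_prime U0)).mp hdvd).resolve_right hqq
    have hWge : q U0 ≤ W U0 := Nat.le_of_dvd (hpos U0 hU0) hWdvd
    have hge1 : (1:ℚ) ≤ (r U0 : ℚ) * (W U0 : ℚ) / (q U0 : ℚ) := by
      rw [le_div_iff₀ (by exact_mod_cast q_pos U0), one_mul]
      have h1 : (q U0 : ℚ) ≤ (W U0 : ℚ) := by exact_mod_cast hWge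
      have h2 : (1:ℚ) ≤ (r U0 : ℚ) := by exact_mod_cast r_pos U0
      nlinarith [show (0:ℚ) < (q U0 : ℚ) from by exact_mod_cast q_pos U0]
    have := block_le_total T W hU0 _ heq
    linarith
  have hTne : T.Nonempty := by
    by_contra hT
    rw [Finset.not_nonempty_iff_eq_empty] at hT
    rw [hT, Finset.sum_empty] at heq
    have : (0:ℚ) < (r S0 : ℚ) * (v : ℚ) / (q S0 : ℚ) := by
      have h1 : (0:ℚ) < r S0 := by exact_mod_cast r_pos S0
      have h2 : (0:ℚ) < q S0 := by exact_mod_cast q_pos S0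
      have h3 : (0:ℚ) < v := by exact_mod_cast hv
      positivity
    linarith [heq]
  have hT : T = {S0} := by
    apply Finset.eq_singleton_iff_nonempty_unique_mem.mpr
    exact ⟨hTne, hsub⟩
  refine ⟨hT, ?_⟩
  rw [hT, Finset.sum_singleton] at heq
  have hq' : (q S0 : ℚ) ≠ 0 := by
    have := q_pos S0; positivity
  have hr' : (r S0 : ℚ) ≠ 0 := by
    have := r_pos S0; positivity
  field_simp at heq
  exact_mod_cast heq

end PZ6

namespace PZ7
open PZ PZ2 PZ3 PZ4 PZ5 PZ6

lemma engine {n : ℕ} (f : Fin n → ℚ) (hf : ∀ i, f i ∈ Atoms) {S0 : Finset ℕ}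
    {v : ℕ} (hv : 0 < v) (hvN : v ≤ Nn S0)
    (hsum : ∑ i, f i = (r S0 : ℚ) * (v : ℚ) / (q S0 : ℚ)) :
    ∃ c d : ℕ → ℕ, (∑ l ∈ S0, c l * Bt S0 l + ∑ l ∈ S0, d l * Aa S0 l = v) ∧
      (∑ l ∈ S0, (c l + d l) = n) := by
  obtain ⟨T, W, cnt, hval, hpos, hcnt, hWsum, hcd⟩ := grouping f hf
  have heq : ∑ U ∈ T, (r U : ℚ) * (W U) / (q U) = (r S0 : ℚ) * v / q S0 := by
    rw [← hWsum]; exact hsum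
  obtain ⟨hT, hW⟩ := single_block T W hpos hv hvN heq
  obtain ⟨c, d, hWd, hcntd⟩ := hcd S0 (by rw [hT]; exact Finset.mem_singleton_self S0)
  refine ⟨c, d, ?_, ?_⟩
  · rw [← hWd]; exact hW
  · rw [hT, Finset.sum_singleton] at hcnt
    rw [← hcntd]; exact hcnt.symm

lemma bf_bound (y : ℚ) (hy : 0 ≤ y) : ∃ b : ℕ, ∀ (n : ℕ) (f : Fin n → ℚ),
    (∀ i, f i ∈ Atoms) → ∑ i, f i = y → n ≤ b := by
  classical
  set K : ℕ := y.den + ⌈y⌉₊ with hK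
  set Fq : ℕ → ℕ := fun k => match (Encodable.decode (α := Finset ℕ) k) with
    | some U => q U | none => 0 with hFq
  set QQ : ℕ := (Finset.range (K+1)).sup Fq with hQQ
  refine ⟨(K+1) * (⌈y⌉₊ * QQ), ?_⟩
  intro n f hf hsum
  obtain ⟨T, W, cnt, hval, hpos, hcnt, hWsum, hcd⟩ := grouping f hf
  have heqy : ∑ U ∈ T, (r U : ℚ) * (W U) / (q U) = y := by rw [← hWsum]; exact hsum
  have heq : ∑ U ∈ T, (r U : ℚ) * (W U) / (q U) = (y.num.toNat : ℚ) / (y.den : ℚ) := by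
    rw [heqy]
    have h1 : ((y.num.toNat : ℕ) : ℚ) = ((y.num : ℤ) : ℚ) := by
      exact_mod_cast congrArg (Int.cast : ℤ → ℚ) (Int.toNat_of_nonneg (Rat.num_nonneg.mpr hy))
    rw [h1, Rat.num_div_den]
  have hdvd := block_dvd T W _ _ y.pos heq
  have hsigle : ∀ U ∈ T, (r U : ℚ) * (W U) / (q U) ≤ y := fun U hU =>
    block_le_total T W hU _ heqy
  have hEK : ∀ U ∈ T, E U ≤ K := by
    intro U hU
    have hEr : E U < r U := Nat.lt_two_pow_self
    rcases (Nat.Prime.dvd_mul (q_prime U)).mp (hdvd U hU) with h | h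
    · have hWq : q U ≤ W U := Nat.le_of_dvd (hpos U hU) h
      have hq2 : (0:ℚ) < (q U : ℚ) := by exact_mod_cast q_pos U
      have hrle : (r U : ℚ) ≤ y := by
        have h2 : (r U : ℚ) ≤ (r U : ℚ) * (W U) / (q U) := by
          rw [le_div_iff₀ hq2]
          have h3 : (q U : ℚ) ≤ (W U : ℚ) := by exact_mod_cast hWq
          have h4 : (0:ℚ) ≤ (r U : ℚ) := by positivity
          nlinarith
        linarith [hsigle U hU]
      have h5 : (r U : ℚ) ≤ (⌈y⌉₊ : ℚ) := le_trans hrle (Nat.le_ceil y)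
      have h6 : r U ≤ ⌈y⌉₊ := by exact_mod_cast h5
      omega
    · have h5 : q U ≤ y.den := Nat.le_of_dvd y.pos h
      have h6 : r U ≤ q U := le_trans (r_le_cix U) (cix_le_q U)
      omega
  have hqQQ : ∀ U ∈ T, q U ≤ QQ := by
    intro U hU
    have hfq : Fq (E U) = q U := by
      rw [hFq]; simp only [E, Encodable.encodek]
    rw [← hfq]
    exact Finset.le_sup (Finset.mem_range.mpr (by have := hEK U hU; omega))
  have hWle : ∀ U ∈ T, W U ≤ ⌈y⌉₊ * QQ := by
    intro U hU
    have hq2 : (0:ℚ) < (q U : ℚ) := by exact_mod_cast q_pos U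
    have hσ := hsigle U hU
    rw [div_le_iff₀ hq2] at hσ
    have hr1 : (1:ℚ) ≤ (r U : ℚ) := by exact_mod_cast r_pos U
    have hWnn : (0:ℚ) ≤ (W U : ℚ) := by positivity
    have h1 : (W U : ℚ) ≤ y * (q U : ℚ) := by nlinarith
    have h2 : y * (q U : ℚ) ≤ (⌈y⌉₊ : ℚ) * (QQ : ℚ) := by
      apply mul_le_mul (Nat.le_ceil y) _ (by positivity) (by positivity)
      exact_mod_cast hqQQ U hU
    have h3 : (W U : ℚ) ≤ ((⌈y⌉₊ * QQ : ℕ) : ℚ) := by push_cast; linarith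
    exact_mod_cast h3
  have hcntW : ∀ U ∈ T, cnt U ≤ W U := by
    intro U hU
    obtain ⟨c, d, hWd, hcntd⟩ := hcd U hU
    rw [hWd, hcntd, Finset.sum_add_distrib]
    apply Nat.add_le_add
    · exact Finset.sum_le_sum fun l hl =>
        Nat.le_mul_of_pos_right _ (Bt_pos (hval U hU) hl)
    · exact Finset.sum_le_sum fun l hl => Nat.le_mul_of_pos_right _ (Aa_pos l)
  have hcard : T.card ≤ K + 1 := by
    have himg : T.image E ⊆ Finset.range (K+1) := by
      intro k hk
      obtain ⟨U, hU, rfl⟩ := Finset.mem_image.mp hk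
      exact Finset.mem_range.mpr (by have := hEK U hU; omega)
    calc T.card = (T.image E).card := (Finset.card_image_of_injective T E_inj).symm
    _ ≤ (Finset.range (K+1)).card := Finset.card_le_card himg
    _ = K + 1 := Finset.card_range _
  calc n = ∑ U ∈ T, cnt U := hcnt
  _ ≤ ∑ _U ∈ T, (⌈y⌉₊ * QQ) :=
      Finset.sum_le_sum (fun U hU => le_trans (hcntW U hU) (hWle U hU))
  _ = T.card * (⌈y⌉₊ * QQ) := by rw [Finset.sum_const, smul_eq_mul]
  _ ≤ (K+1) * (⌈y⌉₊ * QQ) := Nat.mul_le_mul_right _ hcard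

end PZ7

namespace PZ8
open PZ PZ2 PZ3 PZ4 PZ5 PZ6 PZ7

lemma mem_MM_iff {x : ℚ} :
    x ∈ MM ↔ ∃ (k : ℕ) (f : Fin k → ℚ), (∀ i, f i ∈ Atoms) ∧ x = ∑ i, f i := by
  constructor
  · intro hx
    induction hx using AddSubmonoid.closure_induction with
    | mem a ha => exact ⟨1, fun _ => a, fun _ => ha, by simp⟩
    | zero => exact ⟨0, fun i => i.elim0, fun i => i.elim0, by simp⟩
    | add a b _ _ iha ihb =>
      obtain ⟨k1, f1, hf1, rfl⟩ := iha
      obtain ⟨k2, f2, hf2, rfl⟩ := ihb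
      refine ⟨k1 + k2, Fin.append f1 f2, ?_, ?_⟩
      · intro i
        refine Fin.addCases (fun j => ?_) (fun j => ?_) i
        · rw [Fin.append_left]; exact hf1 j
        · rw [Fin.append_right]; exact hf2 j
      · rw [Fin.sum_univ_add]
        simp only [Fin.append_left, Fin.append_right]
  · rintro ⟨k, f, hf, rfl⟩
    exact AddSubmonoid.sum_mem _ (fun i _ => AddSubmonoid.subset_closure (hf i))

end PZ8

namespace PZ9
open PZ PZ2 PZ3 PZ4 PZ5 PZ6 PZ7 PZ8

lemma MM_nonneg : ∀ x ∈ MM, (0:ℚ) ≤ x := by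
  intro x hx
  obtain ⟨k, f, hf, rfl⟩ := mem_MM_iff.mp hx
  exact Finset.sum_nonneg fun i _ => le_of_lt (Atoms_pos (hf i))

lemma av_form {a : ℚ} (ha : a ∈ Atoms) :
    ∃ (S0 : Finset ℕ) (v : ℕ), Valid S0 ∧ 0 < v ∧ v ≤ Nn S0 ∧
      a = (r S0 : ℚ) * (v : ℚ) / (q S0 : ℚ) ∧
      (∀ (k : ℕ) (c d : ℕ → ℕ),
        (∑ l ∈ S0, c l * Bt S0 l + ∑ l ∈ S0, d l * Aa S0 l = v) →
        (∑ l ∈ S0, (c l + d l) = k) → k = 1) := by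
  obtain ⟨S, hS, n, hn, h | h⟩ := ha
  · refine ⟨S, Aa S n, hS, Aa_pos n, Aa_le_Nn hS hn, h, ?_⟩
    intro k c d h1 h2
    have := NL4 hS hn c d h1
    rw [Finset.sum_add_distrib] at h2
    omega
  · refine ⟨S, Bt S n, hS, Bt_pos hS hn, Bt_le_Nn hS hn, h, ?_⟩
    intro k c d h1 h2
    have := NL5 hS hn c d h1
    rw [Finset.sum_add_distrib] at h2
    omega

lemma isAtomOf_iff {a : ℚ} : IsAtomOf MM a ↔ a ∈ Atoms := by
  constructor
  · rintro ⟨haM, ha0, hsplit⟩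
    obtain ⟨k, f, hf, rfl⟩ := mem_MM_iff.mp haM
    match k with
    | 0 => simp at ha0
    | 1 =>
      have : ∑ i, f i = f 0 := Fin.sum_univ_one f
      rw [this]
      exact hf 0
    | (k+2) =>
      exfalso
      have h0 : (0 : Fin (k+2)) ∈ Finset.univ := Finset.mem_univ _
      have hsum := (Finset.add_sum_erase _ f h0).symm
      have hu : f 0 ∈ MM := AddSubmonoid.subset_closure (hf 0)
      have hv : ∑ i ∈ Finset.univ.erase 0, f i ∈ MM :=
        AddSubmonoid.sum_mem _ (fun i _ => AddSubmonoid.subset_closure (hf i))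
      rcases hsplit _ _ hu hv hsum with h | h
      · exact absurd h (ne_of_gt (Atoms_pos (hf 0)))
      · have h1 : (1 : Fin (k+2)) ∈ Finset.univ.erase 0 := by
          rw [Finset.mem_erase]
          exact ⟨by simp [Fin.ext_iff], Finset.mem_univ _⟩
        have : 0 < ∑ i ∈ Finset.univ.erase 0, f i :=
          lt_of_lt_of_le (Atoms_pos (hf 1))
            (Finset.single_le_sum (fun i _ => le_of_lt (Atoms_pos (hf i))) h1)
        exact absurd h this.ne'
  · intro ha
    refine ⟨AddSubmonoid.subset_closure ha, ne_of_gt (Atoms_pos ha), ?_⟩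
    intro u v hu hv huv
    obtain ⟨S0, w, hS0, hw, hwN, hform, hkey⟩ := av_form ha
    obtain ⟨k1, f1, hf1, rfl⟩ := mem_MM_iff.mp hu
    obtain ⟨k2, f2, hf2, rfl⟩ := mem_MM_iff.mp hv
    have hsum : ∑ i, Fin.append f1 f2 i = (r S0 : ℚ) * (w : ℚ) / (q S0 : ℚ) := by
      rw [Fin.sum_univ_add]
      simp only [Fin.append_left, Fin.append_right]
      rw [← huv]; exact hform
    have hfA : ∀ i, Fin.append f1 f2 i ∈ Atoms := by
      intro i
      refine Fin.addCases (fun j => ?_) (fun j => ?_) i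
      · rw [Fin.append_left]; exact hf1 j
      · rw [Fin.append_right]; exact hf2 j
    obtain ⟨c, d, hc1, hc2⟩ := engine (Fin.append f1 f2) hfA hw hwN hsum
    have hk12 : k1 + k2 = 1 := hkey _ c d hc1 hc2
    rcases Nat.eq_zero_or_pos k1 with h1 | h1
    · left
      subst h1
      simp
    · right
      have : k2 = 0 := by omega
      subst this
      simp

end PZ9

namespace PZ10
open PZ PZ2 PZ3 PZ4 PZ5 PZ6 PZ7 PZ8 PZ9

lemma isLengthOf_iff {x : ℚ} {k : ℕ} :
    IsLengthOf MM x k ↔ ∃ f : Fin k → ℚ, (∀ i, f i ∈ Atoms) ∧ x = ∑ i, f i := by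
  constructor
  · rintro ⟨f, h1, h2⟩
    exact ⟨f, fun i => isAtomOf_iff.mp (h1 i), h2⟩
  · rintro ⟨f, h1, h2⟩
    exact ⟨f, fun i => isAtomOf_iff.mpr (h1 i), h2⟩

lemma lengths_zero : lengthsOf MM 0 = {0} := by
  ext k
  simp only [lengthsOf, Set.mem_setOf_eq, Set.mem_singleton_iff]
  constructor
  · intro hk
    obtain ⟨f, hf, hsum⟩ := isLengthOf_iff.mp hk
    by_contra h0
    have hne : (Finset.univ : Finset (Fin k)).Nonempty := by
      rw [Finset.univ_nonempty_iff]
      exact Fin.pos_iff_nonempty.mp (by omega)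
    have : 0 < ∑ i, f i :=
      Finset.sum_pos (fun i _ => Atoms_pos (hf i)) hne
    rw [← hsum] at this
    exact lt_irrefl _ this
  · rintro rfl
    exact isLengthOf_iff.mpr ⟨fun i => i.elim0, fun i => i.elim0, by simp⟩

lemma lengths_atom {a : ℚ} (ha : a ∈ Atoms) : lengthsOf MM a = {1} := by
  ext k
  simp only [lengthsOf, Set.mem_setOf_eq, Set.mem_singleton_iff]
  constructor
  · intro hk
    obtain ⟨f, hf, hsum⟩ := isLengthOf_iff.mp hk
    obtain ⟨S0, w, hS0, hw, hwN, hform, hkey⟩ := av_form ha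
    obtain ⟨c, d, hc1, hc2⟩ := engine f hf hw hwN (by rw [← hsum]; exact hform)
    exact hkey _ c d hc1 hc2
  · rintro rfl
    exact isLengthOf_iff.mpr ⟨fun _ => a, fun _ => ha, by simp⟩

/-- the target element realizing S -/
noncomputable def xv (S : Finset ℕ) : ℚ := (r S : ℚ) * (Nn S : ℚ) / (q S : ℚ)

lemma realize_isLength {S : Finset ℕ} (hS : Valid S) {n : ℕ} (hn : n ∈ S) :
    ∃ f : Fin n → ℚ, (∀ i, f i ∈ Atoms) ∧ xv S = ∑ i, f i := by
  have h2n : 2 ≤ n := hS n hn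
  set i0 : Fin n := ⟨0, by omega⟩ with hi0
  refine ⟨fun i => if i = i0 then av S (Bt S n) else av S (Aa S n), ?_, ?_⟩
  · intro i
    dsimp only
    by_cases h : i = i0
    · rw [if_pos h]; exact ⟨S, hS, n, hn, Or.inr rfl⟩
    · rw [if_neg h]; exact ⟨S, hS, n, hn, Or.inl rfl⟩
  · dsimp only
    rw [← Finset.add_sum_erase _ _ (Finset.mem_univ i0)]
    rw [if_pos rfl]
    have hrest : ∀ i ∈ Finset.univ.erase i0,
        (if i = i0 then av S (Bt S n) else av S (Aa S n)) = av S (Aa S n) := by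
      intro i hi
      rw [if_neg (Finset.mem_erase.mp hi).1]
    rw [Finset.sum_congr rfl hrest, Finset.sum_const, Finset.card_erase_of_mem (Finset.mem_univ i0),
      Finset.card_univ, Fintype.card_fin, nsmul_eq_mul]
    have hb : Bt S n + (n - 1) * Aa S n = Nn S := Bt_add hS hn
    have hcast : (Bt S n : ℚ) + ((n-1 : ℕ) : ℚ) * (Aa S n : ℚ) = (Nn S : ℚ) := by
      exact_mod_cast congrArg (Nat.cast (R := ℚ)) hb
    have hq' : (q S : ℚ) ≠ 0 := by have := q_pos S; positivity
    have key : (r S : ℚ) * (Bt S n : ℚ) / (q S : ℚ)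
        + ((n-1 : ℕ) : ℚ) * ((r S : ℚ) * (Aa S n : ℚ) / (q S : ℚ))
        = (r S : ℚ) * ((Bt S n : ℚ) + ((n-1:ℕ):ℚ) * (Aa S n : ℚ)) / (q S : ℚ) := by
      field_simp
    rw [xv, av, av, key, hcast]

lemma xv_mem {S : Finset ℕ} (hS : Valid S) (hne : S.Nonempty) : xv S ∈ MM := by
  obtain ⟨n, hn⟩ := hne
  obtain ⟨f, hf, hsum⟩ := realize_isLength hS hn
  rw [hsum]
  exact AddSubmonoid.sum_mem _ (fun i _ => AddSubmonoid.subset_closure (hf i))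

lemma lengths_xv {S : Finset ℕ} (hS : Valid S) : lengthsOf MM (xv S) = (S : Set ℕ) := by
  ext k
  simp only [lengthsOf, Set.mem_setOf_eq, Finset.coe_sort_coe, Finset.mem_coe]
  constructor
  · intro hk
    obtain ⟨f, hf, hsum⟩ := isLengthOf_iff.mp hk
    obtain ⟨c, d, hc1, hc2⟩ := engine f hf (Nn_pos) (le_refl _) (by rw [← hsum]; rfl)
    have := NL3 hS c d hc1
    rw [Finset.sum_add_distrib] at hc2
    rwa [hc2] at this
  · intro hk
    obtain ⟨f, hf, hsum⟩ := realize_isLength hS hk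
    exact isLengthOf_iff.mpr ⟨f, hf, hsum⟩

end PZ10

namespace PZ11
open PZ PZ2 PZ3 PZ4 PZ5 PZ6 PZ7 PZ8 PZ9 PZ10

lemma lengths_finite {x : ℚ} (hx : x ∈ MM) : (lengthsOf MM x).Finite := by
  obtain ⟨b, hb⟩ := bf_bound x (MM_nonneg x hx)
  apply Set.Finite.subset (Set.finite_Iic b)
  intro k hk
  obtain ⟨f, hf, hsum⟩ := isLengthOf_iff.mp hk
  exact hb k f hf hsum.symm

lemma lengths_nonempty {x : ℚ} (hx : x ∈ MM) : (lengthsOf MM x).Nonempty := by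
  obtain ⟨k, f, hf, hsum⟩ := mem_MM_iff.mp hx
  exact ⟨k, isLengthOf_iff.mpr ⟨f, hf, hsum⟩⟩

lemma classify {x : ℚ} (hx : x ∈ MM) :
    lengthsOf MM x = {0} ∨ lengthsOf MM x = {1} ∨
      ((lengthsOf MM x).Finite ∧ (lengthsOf MM x).Nonempty ∧
        ∀ k ∈ lengthsOf MM x, 2 ≤ k) := by
  by_cases h0 : x = 0
  · left; rw [h0]; exact lengths_zero
  by_cases hA : x ∈ Atoms
  · right; left; exact lengths_atom hA
  · right; right
    refine ⟨lengths_finite hx, lengths_nonempty hx, ?_⟩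
    intro k hk
    obtain ⟨f, hf, hsum⟩ := isLengthOf_iff.mp hk
    match k, f, hf, hsum with
    | 0, f, hf, hsum => exact absurd (by rw [hsum]; simp) h0
    | 1, f, hf, hsum =>
      exact absurd (by rw [hsum, Fin.sum_univ_one]; exact hf 0) hA
    | (k+2), f, hf, hsum => omega

end PZ11


open Finset PZ PZ2 PZ3 PZ4 PZ5 PZ6 PZ7 PZ8 PZ9 PZ10 PZ11 in
/-- There is an atomic BF Puiseux monoid with full system of sets of lengths. -/
theorem stmt11 :
    ∃ M : AddSubmonoid ℚ, IsPuiseux M ∧ AtomicM M ∧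
      (∀ x ∈ M, (lengthsOf M x).Finite) ∧
      systemOfLengths M =
        {({0} : Set ℕ), {1}} ∪
          {S : Set ℕ | S.Finite ∧ S.Nonempty ∧ ∀ n ∈ S, 2 ≤ n} := by
  refine ⟨MM, MM_nonneg, ?_, ?_, ?_⟩
  · intro x hx _
    obtain ⟨k, f, hf, hsum⟩ := mem_MM_iff.mp hx
    exact ⟨k, isLengthOf_iff.mpr ⟨f, hf, hsum⟩⟩
  · intro x hx
    exact lengths_finite hx
  · ext L
    simp only [systemOfLengths, Set.mem_setOf_eq, Set.mem_union, Set.mem_insert_iff,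
      Set.mem_singleton_iff]
    constructor
    · rintro ⟨x, hx, rfl⟩
      rcases classify hx with h | h | h
      · exact Or.inl (Or.inl h)
      · exact Or.inl (Or.inr h)
      · exact Or.inr h
    · rintro ((rfl | rfl) | ⟨hfin, hne, h2⟩)
      · exact ⟨0, AddSubmonoid.zero_mem _, lengths_zero⟩
      · have hval : Valid ({2} : Finset ℕ) := by
          intro n hn
          simp only [Finset.mem_singleton] at hn
          omega
        have ha : av {2} (Aa {2} 2) ∈ Atoms :=
          ⟨{2}, hval, 2, Finset.mem_singleton_self 2, Or.inl rfl⟩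
        exact ⟨av {2} (Aa {2} 2), AddSubmonoid.subset_closure ha, lengths_atom ha⟩
      · have hval : Valid hfin.toFinset := fun n hn => h2 n (hfin.mem_toFinset.mp hn)
        have hSne : hfin.toFinset.Nonempty := by
          obtain ⟨n0, hn0⟩ := hne
          exact ⟨n0, hfin.mem_toFinset.mpr hn0⟩
        refine ⟨xv hfin.toFinset, xv_mem hval hSne, ?_⟩
        rw [lengths_xv hval]
        exact hfin.coe_toFinset


end
end

section
/- If 2 = a_1·(1/p_1) + a_2·(1/p_2) with p_1 ≠ p_2 distinct primes and a_1, a_2 positive integers, then a_1 = p_1 and a_2 = p_2; in particular every factorization of 2 in ⟨1/p : p prime⟩ using two distinct prime-reciprocal atoms has length p_1 + p_2. -/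
open scoped BigOperators

/-- A factorization of 2 using two distinct prime-reciprocal atoms is forced:
`a₁ = p₁` and `a₂ = p₂`; in particular its length is `p₁ + p₂`. -/
theorem stmt15 (a₁ a₂ p₁ p₂ : ℕ) (ha₁ : 0 < a₁) (ha₂ : 0 < a₂)
    (hp₁ : p₁.Prime) (hp₂ : p₂.Prime) (hne : p₁ ≠ p₂)
    (heq : (a₁ : ℚ) / p₁ + (a₂ : ℚ) / p₂ = 2) :
    a₁ = p₁ ∧ a₂ = p₂ ∧ a₁ + a₂ = p₁ + p₂ := by
  have hp₁0 : (p₁ : ℚ) ≠ 0 := Nat.cast_ne_zero.mpr hp₁.ne_zero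
  have hp₂0 : (p₂ : ℚ) ≠ 0 := Nat.cast_ne_zero.mpr hp₂.ne_zero
  have key : a₁ * p₂ + a₂ * p₁ = 2 * (p₁ * p₂) := by
    have : (a₁ : ℚ) * p₂ + a₂ * p₁ = 2 * (p₁ * p₂) := by
      field_simp at heq; linarith
    exact_mod_cast this
  have hd1 : p₁ ∣ a₁ := by
    have h : p₁ ∣ a₁ * p₂ := by
      have h1 : p₁ ∣ a₁ * p₂ + a₂ * p₁ := key ▸ ⟨2 * p₂, by ring⟩
      have h2 : p₁ ∣ a₂ * p₁ := ⟨a₂, mul_comm _ _⟩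
      exact (Nat.dvd_add_right h2).mp (by rwa [Nat.add_comm] at h1)
    exact (Nat.Coprime.dvd_of_dvd_mul_right
      ((Nat.coprime_primes hp₁ hp₂).mpr hne) h)
  have hd2 : p₂ ∣ a₂ := by
    have h : p₂ ∣ a₂ * p₁ := by
      have h1 : p₂ ∣ a₁ * p₂ + a₂ * p₁ := key ▸ ⟨2 * p₁, by ring⟩
      have h2 : p₂ ∣ a₁ * p₂ := ⟨a₁, mul_comm _ _⟩
      exact (Nat.dvd_add_right h2).mp h1
    exact (Nat.Coprime.dvd_of_dvd_mul_right
      ((Nat.coprime_primes hp₂ hp₁).mpr hne.symm) h)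
  obtain ⟨k, hk⟩ := hd1
  obtain ⟨m, hm⟩ := hd2
  have hp₁p : 0 < p₁ := hp₁.pos
  have hp₂p : 0 < p₂ := hp₂.pos
  have hkm : k + m = 2 := by
    have h : p₁ * p₂ * (k + m) = p₁ * p₂ * 2 := by
      subst hk hm; ring_nf at key ⊢; omega
    exact Nat.eq_of_mul_eq_mul_left (Nat.mul_pos hp₁p hp₂p) h
  have hk0 : k ≠ 0 := by rintro rfl; simp at hk; omega
  have hm0 : m ≠ 0 := by rintro rfl; simp at hm; omega
  have hk1 : k = 1 := by omega
  have hm1 : m = 1 := by omega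
  subst hk1 hm1
  simp at hk hm
  omega
end

section
/- Let p_1, …, p_k be distinct primes, let c_1, …, c_k be nonnegative integers, and let n be a natural number with n = c_1/p_1 + … + c_k/p_k. Then p_i divides c_i for every i = 1, …, k. -/
open scoped BigOperators

/-! Isolating the `i`-th term, `cᵢ / pᵢ = n - ∑_{j ≠ i} cⱼ / pⱼ`. The right-hand side has
`pᵢ`-adic norm at most `1`, because the `pⱼ` with `j ≠ i` are `pᵢ`-adic units and the
`pᵢ`-adic norm is nonarchimedean; and `cᵢ / pᵢ` has `pᵢ`-adic norm at most `1` only if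
`pᵢ ∣ cᵢ`. -/

theorem padicNorm_intCast_div_self_le_one_iff (p : ℕ) [Fact p.Prime] (c : ℤ) :
    padicNorm p (c / p) ≤ 1 ↔ (p : ℤ) ∣ c := by
  have hp : (0 : ℚ) < p := Nat.cast_pos.mpr (Fact.out : p.Prime).pos
  rw [padicNorm.div, padicNorm.padicNorm_p_of_prime, div_inv_eq_mul, ← le_div_iff₀ hp,
    ← pow_one (p : ℤ), ← Nat.cast_pow, padicNorm.dvd_iff_norm_le, one_div, Nat.cast_one,
    zpow_neg_one]

theorem padicNorm_intCast_div_prime_le_one {p q : ℕ} [Fact p.Prime] [Fact q.Prime]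
    (hpq : p ≠ q) (c : ℤ) : padicNorm p (c / q) ≤ 1 := by
  rw [padicNorm.div, padicNorm.padicNorm_of_prime_of_ne hpq, div_one]
  exact padicNorm.of_int c

/-- If a natural number is written as `∑ cᵢ / pᵢ` with distinct primes `pᵢ`,
then `pᵢ ∣ cᵢ` for every `i`. -/
theorem stmt16 (k : ℕ) (p : Fin k → ℕ) (hp : ∀ i, (p i).Prime)
    (hinj : Function.Injective p) (c : Fin k → ℕ) (n : ℕ)
    (heq : (n : ℚ) = ∑ i, (c i : ℚ) / (p i : ℚ)) :
    ∀ i, p i ∣ c i := by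
  intro i
  have := Fact.mk (hp i)
  have hterm : (c i : ℚ) / p i = n - ∑ j ∈ Finset.univ.erase i, (c j : ℚ) / p j := by
    rw [heq, ← Finset.add_sum_erase _ _ (Finset.mem_univ i), add_sub_cancel_right]
  have hrest : padicNorm (p i) (∑ j ∈ Finset.univ.erase i, (c j : ℚ) / p j) ≤ 1 := by
    refine padicNorm.sum_le' (fun j hj => ?_) zero_le_one
    have := Fact.mk (hp j)
    simpa only [Int.cast_natCast] using
      padicNorm_intCast_div_prime_le_one (hinj.ne (Finset.ne_of_mem_erase hj).symm) (c j)
  have hnorm : padicNorm (p i) ((c i : ℤ) / p i) ≤ 1 := by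
    rw [Int.cast_natCast, hterm]
    exact padicNorm.sub.trans (max_le (padicNorm.of_nat n) hrest)
  exact_mod_cast (padicNorm_intCast_div_self_le_one_iff (p i) (c i)).mp hnorm
end

section
/- The atoms of the elementary Puiseux monoid M = ⟨1/p : p prime⟩ are exactly the elements 1/p with p prime; in particular M is atomic. -/
open scoped BigOperators

/-!
Every atom of a monoid generated by a set `A` with `0 ∉ A` lies in `A`, and if every generator
is an atom the monoid is atomic. So everything rests on `1/p` being an atom of `⟨1/q : q prime⟩`.
For this, each `x` in the monoid satisfies `p ∤ den x` or `1/p ≤ x`: both alternatives are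
stable under addition (the first because `den (x + y) ∣ den x * den y`), and the generators
`1/q` satisfy the first for `q ≠ p`. If `1/p = u + v`, then `p ∣ den (u + v)` rules out the
first alternative for both summands, so one of them is at least `1/p` and the other vanishes.
-/

theorem IsLengthOf.zero {α : Type*} [AddCommMonoid α] (S : AddSubmonoid α) :
    IsLengthOf S 0 0 :=
  ⟨Fin.elim0, fun i => i.elim0, by simp⟩

theorem IsLengthOf.add {α : Type*} [AddCommMonoid α] {S : AddSubmonoid α} {x y : α} {m n : ℕ}
    (hx : IsLengthOf S x m) (hy : IsLengthOf S y n) : IsLengthOf S (x + y) (m + n) := by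
  obtain ⟨f, hf, rfl⟩ := hx
  obtain ⟨g, hg, rfl⟩ := hy
  refine ⟨Fin.append f g, fun i => ?_, by rw [Fin.sum_univ_add]; simp⟩
  induction i using Fin.addCases <;> simp [hf, hg]

namespace AddSubmonoid

variable {α : Type*} [AddCommMonoid α] {A : Set α}

theorem eq_zero_or_exists_add_of_mem_closure {x : α} (hx : x ∈ closure A) :
    x = 0 ∨ ∃ y ∈ A, ∃ z ∈ closure A, x = y + z := by
  induction hx using closure_induction_left with
  | zero => exact .inl rfl
  | add_left y hy z hz _ => exact .inr ⟨y, hy, z, hz, rfl⟩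

theorem mem_of_isAtomOf_closure (hA : (0 : α) ∉ A) {a : α} (ha : IsAtomOf (closure A) a) :
    a ∈ A := by
  obtain ⟨ha_mem, ha_ne, ha_split⟩ := ha
  obtain h0 | ⟨y, hy, z, hz, rfl⟩ := eq_zero_or_exists_add_of_mem_closure ha_mem
  · exact absurd h0 ha_ne
  obtain hy0 | rfl := ha_split y z (subset_closure hy) hz rfl
  · exact absurd (hy0 ▸ hy) hA
  · simpa using hy

theorem atomicM_closure (hA : ∀ a ∈ A, IsAtomOf (closure A) a) : AtomicM (closure A) := by
  suffices ∀ x ∈ closure A, ∃ n, IsLengthOf (closure A) x n from fun x hx _ => this x hx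
  intro x hx
  induction hx using closure_induction with
  | mem a ha => exact ⟨1, fun _ => a, fun _ => hA a ha, by simp⟩
  | zero => exact ⟨0, IsLengthOf.zero _⟩
  | add x y _ _ hx hy =>
    obtain ⟨m, hm⟩ := hx
    obtain ⟨n, hn⟩ := hy
    exact ⟨m + n, hm.add hn⟩

end AddSubmonoid

theorem Rat.prime_not_dvd_den_add {p : ℕ} (hp : p.Prime) {x y : ℚ} (hx : ¬ p ∣ x.den)
    (hy : ¬ p ∣ y.den) : ¬ p ∣ (x + y).den := fun h =>
  (hp.dvd_mul.mp (h.trans (Rat.add_den_dvd x y))).elim hx hy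

theorem Rat.den_one_div_natCast {n : ℕ} (hn : 0 < n) : ((1 : ℚ) / n).den = n := by
  rw [one_div, Rat.inv_natCast_den_of_pos hn]

theorem elemPM_isPuiseux : IsPuiseux elemPM := by
  intro x hx
  induction hx using AddSubmonoid.closure_induction with
  | mem x hx =>
    obtain ⟨p, -, rfl⟩ := hx
    positivity
  | zero => exact le_rfl
  | add x y _ _ hx hy => exact add_nonneg hx hy

theorem not_dvd_den_or_one_div_le_of_mem_elemPM {p : ℕ} (hp : p.Prime) {x : ℚ}
    (hx : x ∈ elemPM) : ¬ p ∣ x.den ∨ 1 / (p : ℚ) ≤ x := by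
  induction hx using AddSubmonoid.closure_induction with
  | mem x hx =>
    obtain ⟨q, hq, rfl⟩ := hx
    by_cases hpq : p = q
    · exact .inr (hpq ▸ le_rfl)
    · left
      rwa [Rat.den_one_div_natCast hq.pos, Nat.prime_dvd_prime_iff_eq hp hq]
  | zero => exact .inl (by simpa using hp.ne_one)
  | add x y hxM hyM hx hy =>
    rcases hx with hx | hx
    · rcases hy with hy | hy
      · exact .inl (Rat.prime_not_dvd_den_add hp hx hy)
      · exact .inr (le_add_of_nonneg_of_le (elemPM_isPuiseux x hxM) hy)
    · exact .inr (le_add_of_le_of_nonneg hx (elemPM_isPuiseux y hyM))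

theorem isAtomOf_elemPM_one_div_prime {p : ℕ} (hp : p.Prime) :
    IsAtomOf elemPM (1 / (p : ℚ)) := by
  refine ⟨AddSubmonoid.subset_closure ⟨p, hp, rfl⟩, by simpa using hp.ne_zero,
    fun u v hu hv huv => ?_⟩
  have hden : p ∣ (u + v).den := by rw [← huv, Rat.den_one_div_natCast hp.pos]
  have hu0 := elemPM_isPuiseux u hu
  have hv0 := elemPM_isPuiseux v hv
  rcases not_dvd_den_or_one_div_le_of_mem_elemPM hp hu with hu' | hu'
  · rcases not_dvd_den_or_one_div_le_of_mem_elemPM hp hv with hv' | hv'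
    · exact absurd hden (Rat.prime_not_dvd_den_add hp hu' hv')
    · left; linarith
  · right; linarith

/-- The atoms of the elementary Puiseux monoid are exactly the reciprocals of
primes; in particular the monoid is atomic. -/
theorem stmt17 :
    (∀ a : ℚ, IsAtomOf elemPM a ↔ ∃ p : ℕ, p.Prime ∧ a = 1 / p) ∧
      AtomicM elemPM := by
  have hgen : ∀ a ∈ {q : ℚ | ∃ p : ℕ, p.Prime ∧ q = 1 / p}, IsAtomOf elemPM a := by
    rintro _ ⟨p, hp, rfl⟩
    exact isAtomOf_elemPM_one_div_prime hp
  have hzero : (0 : ℚ) ∉ {q : ℚ | ∃ p : ℕ, p.Prime ∧ q = 1 / p} := by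
    rintro ⟨p, hp, h⟩
    exact (isAtomOf_elemPM_one_div_prime hp).2.1 h.symm
  exact ⟨fun a => ⟨AddSubmonoid.mem_of_isAtomOf_closure hzero, hgen a⟩, AddSubmonoid.atomicM_closure hgen⟩
end
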